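/- arXiv:1305.7223 — 4 statements merged into one kernel-verified Lean document; each statement's English description precedes it below -/
import Mathlib

section
/- Let G be a group generated by elements g₁,…,gₙ together with the normal closure of the relations [gᵢˣ, gᵢʸ] = 1 for all i and all x, y ∈ G (i.e., G is a quotient of the free group on n generators by these relations, the free Milnor group). Then G is nilpotent of nilpotency class at most n. -/
/-- The set of Milnor relators: commutators of two conjugates of the same generator. -/
def milnorRelators (n : ℕ) : Set (FreeGroup (Fin n)) :=
  {w | ∃ (i : Fin n) (x y : FreeGroup (Fin n)),
    w = (x⁻¹ * FreeGroup.of i * x)⁻¹ * (y⁻¹ * FreeGroup.of i * y)⁻¹ *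
        (x⁻¹ * FreeGroup.of i * x) * (y⁻¹ * FreeGroup.of i * y)}

/-- The free Milnor group on `n` generators. -/
def MilnorGroup (n : ℕ) : Type :=
  FreeGroup (Fin n) ⧸ Subgroup.normalClosure (milnorRelators n)

noncomputable instance (n : ℕ) : Group (MilnorGroup n) :=
  QuotientGroup.Quotient.group _

/-!
Killing the generator `gᵢ` of `MFₙ₊₁` gives `MFₙ`, and the kernel is the normal closure `Nᵢ`
of `gᵢ`. By induction, `γₙ₊₁(MFₙ₊₁)` maps to `γₙ₊₁(MFₙ) = 1`, so it lies in every `Nᵢ`.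
The Milnor relations say that `Nᵢ`, generated by the conjugates of `gᵢ`, centralizes `gᵢ`;
hence `γₙ₊₁(MFₙ₊₁)` commutes with every generator, i.e. is central, and `γₙ₊₂(MFₙ₊₁) = 1`.
-/

open Subgroup

open scoped commutatorElement

variable {G : Type*} [Group G]

theorem commute_conj_conj {a : G} (h : ∀ x : G, Commute a (x * a * x⁻¹)) (x y : G) :
    Commute (x * a * x⁻¹) (y * a * y⁻¹) := by
  simpa [mul_assoc] using (h (x⁻¹ * y)).map (MulAut.conj x)

namespace Subgroup

theorem normalClosure_singleton_le_centralizer {a : G} (h : ∀ x : G, Commute a (x * a * x⁻¹)) :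
    normalClosure {a} ≤ centralizer {a} := by
  refine closure_le _ |>.mpr fun b hb => ?_
  obtain ⟨_, rfl, hab⟩ := Group.mem_conjugatesOfSet_iff.mp hb
  obtain ⟨x, rfl⟩ := isConj_iff.mp hab
  exact mem_centralizer_singleton_iff.mpr (h x).symm.eq

theorem top_lowerCentralSeries_le_ker {K : Type*} [Group K] {f : G →* K} {n : ℕ}
    (h : (⊤ : Subgroup K).lowerCentralSeries n = ⊥) :
    (⊤ : Subgroup G).lowerCentralSeries n ≤ f.ker := by
  rw [← MonoidHom.comap_bot, ← map_le_iff_le_comap, map_lowerCentralSeries, ← h]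
  exact lowerCentralSeries_mono n le_top

theorem top_lowerCentralSeries_succ_eq_bot_of_le_normalClosure {ι : Type*} {g : ι → G}
    (hg : closure (Set.range g) = ⊤) (hcomm : ∀ i (x : G), Commute (g i) (x * g i * x⁻¹))
    {n : ℕ} (h : ∀ i, (⊤ : Subgroup G).lowerCentralSeries n ≤ normalClosure {g i}) :
    (⊤ : Subgroup G).lowerCentralSeries (n + 1) = ⊥ := by
  refine lowerCentralSeries_succ_eq_bot _ ?_
  rw [center_eq_iInf hg, iInf_range]
  exact le_iInf fun i => (h i).trans (normalClosure_singleton_le_centralizer (hcomm i))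

end Subgroup

namespace MilnorGroup

variable {n : ℕ} {H : Type*} [Group H]

variable (n) in
noncomputable def mk : FreeGroup (Fin n) →* MilnorGroup n :=
  QuotientGroup.mk' _

noncomputable def of (i : Fin n) : MilnorGroup n :=
  mk n (FreeGroup.of i)

theorem mk_surjective : Function.Surjective (mk n) :=
  QuotientGroup.mk'_surjective _

theorem commute_of_conj (i : Fin n) (x : MilnorGroup n) : Commute (of i) (x * of i * x⁻¹) := by
  obtain ⟨w, rfl⟩ := mk_surjective x
  -- the Milnor relator for the conjugators `1` and `w⁻¹` is `⁅gᵢ⁻¹, (w gᵢ w⁻¹)⁻¹⁆`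
  have hrel : mk n ((1⁻¹ * FreeGroup.of i * 1)⁻¹ * (w * FreeGroup.of i * w⁻¹)⁻¹ *
      (1⁻¹ * FreeGroup.of i * 1) * (w * FreeGroup.of i * w⁻¹)) = 1 :=
    (QuotientGroup.eq_one_iff _).mpr <| subset_normalClosure ⟨i, 1, w⁻¹, by rw [inv_inv]⟩
  have : ⁅(of i)⁻¹, (mk n w * of i * (mk n w)⁻¹)⁻¹⁆ = 1 := by
    simpa only [of, commutatorElement_def, inv_inv, inv_one, one_mul, mul_one, map_mul, map_inv]
      using hrel
  exact Commute.inv_inv_iff.mp (commutatorElement_eq_one_iff_commute.mp this)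

theorem closure_range_of : closure (Set.range (of (n := n))) = ⊤ := by
  rw [← map_top_of_surjective _ mk_surjective, ← FreeGroup.closure_range_of, MonoidHom.map_closure,
    ← Set.range_comp]
  rfl

theorem hom_ext {f f' : MilnorGroup n →* H} (h : ∀ i, f (of i) = f' (of i)) : f = f' :=
  QuotientGroup.monoidHom_ext _ <| FreeGroup.ext_hom _ _ h

noncomputable def lift (f : Fin n → H) (hf : ∀ i (x : H), Commute (f i) (x * f i * x⁻¹)) :
    MilnorGroup n →* H :=
  QuotientGroup.lift _ (FreeGroup.lift f) <| normalClosure_le_normal <| by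
    rintro _ ⟨i, x, y, rfl⟩
    have hxy := commutatorElement_eq_one_iff_commute.mpr
      (commute_conj_conj (hf i) (FreeGroup.lift f x)⁻¹ (FreeGroup.lift f y)⁻¹).inv_inv
    simpa only [commutatorElement_def, inv_inv, SetLike.mem_coe, MonoidHom.mem_ker, map_mul,
      map_inv, FreeGroup.lift_apply_of] using hxy

theorem lift_of (f : Fin n → H) (hf : ∀ i (x : H), Commute (f i) (x * f i * x⁻¹)) (i : Fin n) :
    lift f hf (of i) = f i :=
  FreeGroup.lift_apply_of

noncomputable def killGenerator (i : Fin (n + 1)) : MilnorGroup (n + 1) →* MilnorGroup n :=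
  lift (Fin.insertNth i 1 of) fun j x => by
    cases j using Fin.succAboveCases i with
    | x => simp
    | p k => simpa using commute_of_conj k x

@[simp]
theorem killGenerator_of_self (i : Fin (n + 1)) : killGenerator i (of i) = 1 := by
  rw [killGenerator, lift_of, Fin.insertNth_apply_same]

@[simp]
theorem killGenerator_of_succAbove (i : Fin (n + 1)) (k : Fin n) :
    killGenerator i (of (i.succAbove k)) = of k := by
  rw [killGenerator, lift_of, Fin.insertNth_apply_succAbove]

theorem ker_killGenerator_le (i : Fin (n + 1)) :
    (killGenerator i).ker ≤ normalClosure {of i} := by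
  -- `π : MFₙ₊₁ → MFₙ₊₁ ⧸ Nᵢ` factors through `killGenerator i`
  let π := QuotientGroup.mk' (normalClosure {of i})
  let s : MilnorGroup n →* MilnorGroup (n + 1) ⧸ normalClosure {of i} :=
    lift (fun k => π (of (i.succAbove k))) fun k x => by
      obtain ⟨x, rfl⟩ := QuotientGroup.mk'_surjective _ x
      simpa only [map_mul, map_inv] using (commute_of_conj (i.succAbove k) x).map π
  have hs : s.comp (killGenerator i) = π := hom_ext fun j => by
    cases j using Fin.succAboveCases i with
    | x =>
      rw [MonoidHom.comp_apply, killGenerator_of_self, map_one, eq_comm]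
      exact (QuotientGroup.eq_one_iff _).mpr (subset_normalClosure rfl)
    | p k => rw [MonoidHom.comp_apply, killGenerator_of_succAbove, lift_of]
  intro x hx
  have hπx := DFunLike.congr_fun hs x
  rw [MonoidHom.comp_apply, MonoidHom.mem_ker.mp hx, map_one] at hπx
  exact (QuotientGroup.eq_one_iff x).mp hπx.symm

end MilnorGroup

/-- Mathlib indexes the lower central series from `lowerCentralSeries _ 0 = ⊤`, so
`lowerCentralSeries _ n` is the `(n+1)`-st term `γₙ₊₁`. -/
theorem milnorGroup_nilpotent (n : ℕ) :
    (⊤ : Subgroup (MilnorGroup n)).lowerCentralSeries n = ⊥ := by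
  induction n with
  | zero =>
    rw [Subgroup.lowerCentralSeries_zero, ← MilnorGroup.closure_range_of, Set.range_eq_empty,
      Subgroup.closure_empty]
  | succ n ih =>
    exact top_lowerCentralSeries_succ_eq_bot_of_le_normalClosure MilnorGroup.closure_range_of
      MilnorGroup.commute_of_conj fun i =>
        (top_lowerCentralSeries_le_ker ih).trans (MilnorGroup.ker_killGenerator_le i)
end

section
/- Let R be the quotient of the ring of formal power series in noncommuting variables x₁,…,xₙ over ℤ by the two-sided ideal generated by all monomials in which some variable occurs at least twice. Then the Magnus map sending gᵢ ↦ 1 + xᵢ defines a ring element whose inverse in R is 1 - xᵢ + xᵢ² - ⋯ (which in R equals 1 - xᵢ since xᵢ² = 0), and the induced group homomorphism from the free group Fₙ to the group of units of R factors through the free Milnor group MFₙ (i.e., all elements [gᵢˣ, gᵢʸ] map to 1). -/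
/-- The relation imposing that every monomial with a repeated variable is zero. -/
def repeatRel (n : ℕ) (a b : FreeAlgebra ℤ (Fin n)) : Prop :=
  b = 0 ∧ ∃ l : List (Fin n), ¬ l.Nodup ∧ a = (l.map (FreeAlgebra.ι ℤ)).prod

/-- The ring `ℤ⟨⟨x₁,…,xₙ⟩⟩` modulo the two-sided ideal generated by all monomials
in which some variable occurs at least twice. -/
def MagnusRing (n : ℕ) : Type := RingQuot (repeatRel n)

noncomputable instance (n : ℕ) : Ring (MagnusRing n) := RingQuot.instRing _

/-- The image of the variable `xᵢ` in the quotient ring. -/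
noncomputable def X (n : ℕ) (i : Fin n) : MagnusRing n :=
  RingQuot.mkRingHom (repeatRel n) (FreeAlgebra.ι ℤ i)

/-!
Every monomial containing `xᵢ` twice vanishes, so `xᵢ c xᵢ = 0` for every `c ∈ R`. In particular
`xᵢ² = 0`, so `1 + xᵢ` is a unit with inverse `1 - xᵢ`. The conjugates of `M(gᵢ)` are the units
`1 + u⁻¹ xᵢ u`, and for `p = u⁻¹ xᵢ u`, `q = v⁻¹ xᵢ v` we get `p q = u⁻¹ (xᵢ (u v⁻¹) xᵢ) v = 0` and
likewise `q p = 0`. Hence `(1 + p)(1 + q) = 1 + p + q = (1 + q)(1 + p)`: the conjugates of `M(gᵢ)`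
commute with each other, so `M` kills their commutators.
-/

theorem FreeAlgebra.mem_span_mrange_lift_ι {R α : Type*} [CommSemiring R] (a : FreeAlgebra R α) :
    a ∈ Submodule.span R
      (MonoidHom.mrange (FreeMonoid.lift (ι R : α → FreeAlgebra R α)) : Set (FreeAlgebra R α)) := by
  rw [FreeMonoid.mrange_lift, ← Algebra.adjoin_eq_span, adjoin_range_ι]
  trivial

theorem one_add_mul_one_sub_of_mul_self_eq_zero {R : Type*} [Ring R] {x : R} (hx : x * x = 0) :
    (1 + x) * (1 - x) = 1 ∧ (1 - x) * (1 + x) = 1 := by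
  constructor
  · rw [← (Commute.one_left x).mul_self_sub_mul_self_eq, hx, mul_one, sub_zero]
  · rw [← (Commute.one_left x).mul_self_sub_mul_self_eq', hx, mul_one, sub_zero]

theorem commute_one_add_of_mul_eq_zero {R : Type*} [Ring R] {p q : R} (hpq : p * q = 0)
    (hqp : q * p = 0) : Commute (1 + p) (1 + q) := by
  simp only [Commute, SemiconjBy, mul_add, add_mul, mul_one, one_mul, hpq, hqp]
  abel

theorem Units.commute_conj_of_mul_mul_eq_zero {R : Type*} [Ring R] {x : R}
    (hx : ∀ c, x * c * x = 0) {g : Rˣ} (hg : (g : R) = 1 + x) (u v : Rˣ) :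
    Commute (u⁻¹ * g * u) (v⁻¹ * g * v) := by
  have conj (w : Rˣ) : ((w⁻¹ * g * w : Rˣ) : R) = 1 + ↑w⁻¹ * x * ↑w := by
    simp [hg, mul_add, add_mul]
  have conj_mul_conj (w w' : Rˣ) : (↑w⁻¹ * x * ↑w) * (↑w'⁻¹ * x * ↑w') = 0 := by
    calc (↑w⁻¹ * x * ↑w) * (↑w'⁻¹ * x * ↑w') = ↑w⁻¹ * (x * (↑w * ↑w'⁻¹) * x) * ↑w' := by
          simp only [mul_assoc]
      _ = 0 := by rw [hx, mul_zero, zero_mul]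
  rw [← Commute.units_val_iff, conj, conj]
  exact commute_one_add_of_mul_eq_zero (conj_mul_conj u v) (conj_mul_conj v u)

theorem mkRingHom_ι_mul_mul_ι (n : ℕ) (i : Fin n) (a : FreeAlgebra ℤ (Fin n)) :
    RingQuot.mkRingHom (repeatRel n) (FreeAlgebra.ι ℤ i * a * FreeAlgebra.ι ℤ i) = 0 := by
  induction FreeAlgebra.mem_span_mrange_lift_ι a using Submodule.span_induction with
  | mem m hm =>
    obtain ⟨w, rfl⟩ := hm
    have hrel : repeatRel n
        (FreeAlgebra.ι ℤ i * FreeMonoid.lift (FreeAlgebra.ι ℤ) w * FreeAlgebra.ι ℤ i) 0 :=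
      ⟨rfl, i :: (w.toList ++ [i]), by simp, by simp [FreeMonoid.lift_apply, mul_assoc]⟩
    rw [RingQuot.mkRingHom_rel hrel, map_zero]
  | zero => simp
  | add u v _ _ hu hv => rw [mul_add, add_mul, map_add, hu, hv, add_zero]
  | smul z u _ hu =>
    rw [mul_smul_comm, smul_mul_assoc, Algebra.smul_def, map_mul, hu, mul_zero]

theorem X_mul_mul_X (n : ℕ) (i : Fin n) (c : MagnusRing n) : X n i * c * X n i = 0 := by
  obtain ⟨a, rfl⟩ := RingQuot.mkRingHom_surjective (repeatRel n) c
  have h := mkRingHom_ι_mul_mul_ι n i a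
  rw [map_mul, map_mul] at h
  exact h

/-- In the Magnus ring, `1 + xᵢ` is a unit with inverse `1 - xᵢ`, and any
group homomorphism `M` from the free group to the units of the Magnus ring with
`M(gᵢ) = 1 + xᵢ` (the Magnus expansion) kills every commutator of two conjugates
of the same generator, hence factors through the free Milnor group. -/
theorem magnus_factors_through_milnor (n : ℕ) :
    (∀ i : Fin n, (1 + X n i) * (1 - X n i) = 1 ∧ (1 - X n i) * (1 + X n i) = 1) ∧
    ∀ (M : FreeGroup (Fin n) →* (MagnusRing n)ˣ),
      (∀ i : Fin n, (M (FreeGroup.of i) : MagnusRing n) = 1 + X n i) →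
      ∀ (i : Fin n) (x y : FreeGroup (Fin n)),
        M ((x⁻¹ * FreeGroup.of i * x)⁻¹ * (y⁻¹ * FreeGroup.of i * y)⁻¹ *
           (x⁻¹ * FreeGroup.of i * x) * (y⁻¹ * FreeGroup.of i * y)) = 1 := by
  refine ⟨fun i => one_add_mul_one_sub_of_mul_self_eq_zero ?_, fun M hM i x y => ?_⟩
  · simpa only [mul_one] using X_mul_mul_X n i 1
  · have hcomm : Commute (M (x⁻¹ * FreeGroup.of i * x)) (M (y⁻¹ * FreeGroup.of i * y)) := by
      simp only [map_mul, map_inv]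
      exact Units.commute_conj_of_mul_mul_eq_zero (X_mul_mul_X n i) (hM i) _ _
    rw [map_mul, map_mul, map_mul, map_inv, map_inv]
    simpa only [commutatorElement_def, inv_inv] using
      commutatorElement_eq_one_iff_commute.mpr hcomm.inv_inv
end

section
/- Let F be the free group on generators m₂, m₃, m₄ and let MF be its Milnor group (the quotient by the normal closure of all [mᵢˣ, mᵢʸ]). Then in MF the element [[m₃,m₄],m₂] · [[m₂,m₃],m₄] · [[m₄,m₂],m₃] is trivial. -/
/-- The commutator `[a,b] = a⁻¹b⁻¹ab`. -/
def c {G : Type*} [Group G] (a b : G) : G := a⁻¹ * b⁻¹ * a * b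

/-- A variant of the Hall–Witt identity, valid in every group. -/
lemma hallWitt {G : Type*} [Group G] (x y z : G) :
    c (c x y) (x⁻¹*z*x) * c (c z x) (z⁻¹*y*z) * c (c y z) (y⁻¹*x*y) = 1 := by
  simp only [c]; group

lemma conj_c {G : Type*} [Group G] (g a z : G) :
    c g (a⁻¹ * z * a) = a⁻¹ * c (a * g * a⁻¹) z * a := by
  simp only [c]; group

/-- If conjugates of `a` all commute, then `a` commutes with `c a b`. -/
lemma comm_cab {G : Type*} [Group G] {a : G}
    (ha : ∀ x y : G, Commute (x⁻¹ * a * x) (y⁻¹ * a * y)) (b : G) :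
    Commute a (c a b) := by
  have h1 : ∀ w : G, Commute a (w⁻¹ * a * w) := fun w => by simpa using ha 1 w
  have e : c a b = a⁻¹ * (b⁻¹ * a * b) := by simp only [c]; group
  rw [e]
  exact ((Commute.refl a).inv_right).mul_right (h1 b)

/-- If conjugates of `a` all commute, then `a` commutes with `c (c a b) z`. -/
lemma comm_ccabz {G : Type*} [Group G] {a : G}
    (ha : ∀ x y : G, Commute (x⁻¹ * a * x) (y⁻¹ * a * y)) (b z : G) :
    Commute a (c (c a b) z) := by
  have h1 : ∀ w : G, Commute a (w⁻¹ * a * w) := fun w => by simpa using ha 1 w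
  have e : c (c a b) z =
      ((b⁻¹*a*b)⁻¹ * a) * ((z⁻¹*a*z)⁻¹ * ((b*z)⁻¹ * a * (b*z))) := by
    simp only [c]; group
  rw [e]
  exact ((h1 b).inv_right.mul_right (Commute.refl a)).mul_right
    ((h1 z).inv_right.mul_right (h1 (b*z)))

/-- Reducing one Hall–Witt term when conjugates of `a` commute. -/
lemma term_reduce {G : Type*} [Group G] {a : G}
    (ha : ∀ x y : G, Commute (x⁻¹ * a * x) (y⁻¹ * a * y)) (b z : G) :
    c (c a b) (a⁻¹ * z * a) = c (c a b) z := by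
  have h1 : a * c a b * a⁻¹ = c a b := by
    have := (comm_cab ha b).eq
    rw [this]; group
  rw [conj_c, h1]
  have h2 := (comm_ccabz ha b z).eq
  rw [mul_assoc, ← h2, ← mul_assoc, inv_mul_cancel, one_mul]

/-- The Jacobi-type identity in any group in which the conjugates of each of
`a`, `b`, `d` commute among themselves. -/
lemma jacobi {G : Type*} [Group G] {a b d : G}
    (ha : ∀ x y : G, Commute (x⁻¹ * a * x) (y⁻¹ * a * y))
    (hb : ∀ x y : G, Commute (x⁻¹ * b * x) (y⁻¹ * b * y))
    (hd : ∀ x y : G, Commute (x⁻¹ * d * x) (y⁻¹ * d * y)) :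
    c (c b d) a * c (c a b) d * c (c d a) b = 1 := by
  have hw := hallWitt a b d
  rw [term_reduce ha b d, term_reduce hd a b, term_reduce hb d a] at hw
  have : c (c a b) d * c (c d a) b = (c (c b d) a)⁻¹ := by
    rw [eq_inv_iff_mul_eq_one]; simpa [mul_assoc] using hw
  rw [mul_assoc, this, mul_inv_cancel]

/-- In the free Milnor group, any two conjugates of a generator commute. -/
lemma milnor_comm (n : ℕ) (i : Fin n)
    (x y : FreeGroup (Fin n) ⧸ Subgroup.normalClosure (milnorRelators n)) :
    Commute (x⁻¹ * QuotientGroup.mk (FreeGroup.of i) * x)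
      (y⁻¹ * QuotientGroup.mk (FreeGroup.of i) * y) := by
  obtain ⟨x, rfl⟩ := QuotientGroup.mk_surjective x
  obtain ⟨y, rfl⟩ := QuotientGroup.mk_surjective y
  have h : (QuotientGroup.mk ((x⁻¹ * FreeGroup.of i * x)⁻¹ * (y⁻¹ * FreeGroup.of i * y)⁻¹ *
      (x⁻¹ * FreeGroup.of i * x) * (y⁻¹ * FreeGroup.of i * y)) :
      FreeGroup (Fin n) ⧸ Subgroup.normalClosure (milnorRelators n)) = 1 := by
    rw [QuotientGroup.eq_one_iff]
    exact Subgroup.subset_normalClosure ⟨i, x, y, rfl⟩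
  set U : FreeGroup (Fin n) ⧸ Subgroup.normalClosure (milnorRelators n) :=
    QuotientGroup.mk (x⁻¹ * FreeGroup.of i * x) with hU
  set V : FreeGroup (Fin n) ⧸ Subgroup.normalClosure (milnorRelators n) :=
    QuotientGroup.mk (y⁻¹ * FreeGroup.of i * y) with hV
  have h2 : U⁻¹ * V⁻¹ * U * V = 1 := by
    rw [hU, hV]
    simpa [QuotientGroup.mk_mul, QuotientGroup.mk_inv, mul_assoc] using h
  have h3 : Commute U⁻¹ V⁻¹ := by
    rw [← commutatorElement_eq_one_iff_commute]
    simpa [commutatorElement_def] using h2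
  have h4 : Commute U V := by simpa using h3.inv_inv
  simpa [hU, hV, QuotientGroup.mk_mul, QuotientGroup.mk_inv, mul_assoc] using h4

/-- In the free Milnor group on generators `m₂, m₃, m₄` (indexed by `0, 1, 2`),
the Jacobi-type product `[[m₃,m₄],m₂] ⬝ [[m₂,m₃],m₄] ⬝ [[m₄,m₂],m₃]` is trivial. -/
theorem jacobi_product_trivial_in_milnor :
    letI m : Fin 3 → MilnorGroup 3 :=
      fun i => QuotientGroup.mk (FreeGroup.of i)
    c (c (m 1) (m 2)) (m 0) * c (c (m 0) (m 1)) (m 2) * c (c (m 2) (m 0)) (m 1) = 1 := by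
  exact jacobi (milnor_comm 3 0) (milnor_comm 3 1) (milnor_comm 3 2)
end

section
/- There do not exist integers a₃, a₄, a₅, a₆, b₁, b₂, b₅, b₆, c₁, c₂, c₃, c₄ satisfying the system: b₆c₄ - b₅c₃ = 1; b₆c₃ - b₅c₄ = 1; -a₃b₂ + b₁a₄ = 1; -a₃b₆c₂ - b₁a₅c₄ = 1; a₃b₅c₂ + b₁a₆c₄ = 1; -a₄b₂ + b₁a₃ = 1; -a₄b₆c₂ - b₁a₅c₃ = 1; a₄b₅c₂ + b₁a₆c₃ = 1; a₅b₂c₄ - c₁a₃b₆ = 1; a₅b₂c₃ - c₁a₄b₆ = 1; a₅c₂ + c₁a₆ = 1; a₆b₂c₄ - c₁a₃b₅ = 1; a₆b₂c₃ - c₁a₄b₅ = 1; a₆c₂ + c₁a₅ = 1. -/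
lemma no_mod2_solution :
    ∀ a3 a4 a5 a6 b1 b2 b5 b6 c1 c2 c3 c4 : ZMod 2,
      ¬ (b6 * c4 - b5 * c3 = 1 ∧
      b6 * c3 - b5 * c4 = 1 ∧
      -a3 * b2 + b1 * a4 = 1 ∧
      -a3 * b6 * c2 - b1 * a5 * c4 = 1 ∧
      a3 * b5 * c2 + b1 * a6 * c4 = 1 ∧
      -a4 * b2 + b1 * a3 = 1 ∧
      -a4 * b6 * c2 - b1 * a5 * c3 = 1 ∧
      a4 * b5 * c2 + b1 * a6 * c3 = 1 ∧
      a5 * b2 * c4 - c1 * a3 * b6 = 1 ∧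
      a5 * b2 * c3 - c1 * a4 * b6 = 1 ∧
      a5 * c2 + c1 * a6 = 1 ∧
      a6 * b2 * c4 - c1 * a3 * b5 = 1 ∧
      a6 * b2 * c3 - c1 * a4 * b5 = 1 ∧
      a6 * c2 + c1 * a5 = 1) := by decide

/-- The system of 14 polynomial equations arising from the relative-slice
problem for the Borromean rings has no integer solutions. -/
theorem no_integral_solution :
    ¬ ∃ a3 a4 a5 a6 b1 b2 b5 b6 c1 c2 c3 c4 : ℤ,
      b6 * c4 - b5 * c3 = 1 ∧
      b6 * c3 - b5 * c4 = 1 ∧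
      -a3 * b2 + b1 * a4 = 1 ∧
      -a3 * b6 * c2 - b1 * a5 * c4 = 1 ∧
      a3 * b5 * c2 + b1 * a6 * c4 = 1 ∧
      -a4 * b2 + b1 * a3 = 1 ∧
      -a4 * b6 * c2 - b1 * a5 * c3 = 1 ∧
      a4 * b5 * c2 + b1 * a6 * c3 = 1 ∧
      a5 * b2 * c4 - c1 * a3 * b6 = 1 ∧
      a5 * b2 * c3 - c1 * a4 * b6 = 1 ∧
      a5 * c2 + c1 * a6 = 1 ∧
      a6 * b2 * c4 - c1 * a3 * b5 = 1 ∧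
      a6 * b2 * c3 - c1 * a4 * b5 = 1 ∧
      a6 * c2 + c1 * a5 = 1 := by
  rintro ⟨a3, a4, a5, a6, b1, b2, b5, b6, c1, c2, c3, c4,
    h1, h2, h3, h4, h5, h6, h7, h8, h9, h10, h11, h12, h13, h14⟩
  have f : ℤ →+* ZMod 2 := Int.castRingHom (ZMod 2)
  exact no_mod2_solution (f a3) (f a4) (f a5) (f a6) (f b1) (f b2) (f b5) (f b6)
    (f c1) (f c2) (f c3) (f c4)
    ⟨by simpa using congrArg f h1, by simpa using congrArg f h2,
     by simpa using congrArg f h3, by simpa using congrArg f h4,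
     by simpa using congrArg f h5, by simpa using congrArg f h6,
     by simpa using congrArg f h7, by simpa using congrArg f h8,
     by simpa using congrArg f h9, by simpa using congrArg f h10,
     by simpa using congrArg f h11, by simpa using congrArg f h12,
     by simpa using congrArg f h13, by simpa using congrArg f h14⟩
end
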